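/- arXiv:2106.07021 — 2 statements merged into one kernel-verified Lean document; each statement's English description precedes it below -/
import Mathlib

section
/- In a canonical game of 2m rounds (m ≥ 1) on ℂ^n in which the action group B of player 2 contains every n×n permutation matrix and is a proper subgroup of the action group A of player 1 (S_n ≤ B < A ≤ U(n)), player 1 has no strong winning strategy: for every sequence A_1, …, A_m ∈ A there exists a sequence B_1, …, B_m ∈ B such that B_m A_m ⋯ B_1 A_1 e_{q0} ≠ e_{qA}. -/
/-- The product of the moves in a canonical `2m`-round game, namely
`B_m * A_m * ⋯ * B_1 * A_1`, where player 1 plays `A_1, …, A_m` at odd rounds and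
player 2 plays `B_1, …, B_m` at even rounds. -/
noncomputable def canonicalProd {n m : ℕ} (As Bs : Fin m → Matrix (Fin n) (Fin n) ℂ) :
    Matrix (Fin n) (Fin n) ℂ :=
  ((List.ofFn fun i => Bs i * As i).reverse).prod

/-- The product of the moves in a noncanonical `2m+1`-round game, namely
`A_{m+1} * B_m * A_m * ⋯ * B_1 * A_1`, where player 1 makes the first and the
last move. -/
noncomputable def noncanonicalProd {n m : ℕ} (As : Fin (m + 1) → Matrix (Fin n) (Fin n) ℂ)
    (Bs : Fin m → Matrix (Fin n) (Fin n) ℂ) : Matrix (Fin n) (Fin n) ℂ :=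
  As (Fin.last m) * ((List.ofFn fun i : Fin m => Bs i * As i.castSucc).reverse).prod

/-- The underlying matrix of an element of a subgroup of the unitary group. -/
noncomputable def toMat {n : ℕ} {G : Subgroup (Matrix.unitaryGroup (Fin n) ℂ)} (x : G) :
    Matrix (Fin n) (Fin n) ℂ :=
  ((x : Matrix.unitaryGroup (Fin n) ℂ) : Matrix (Fin n) (Fin n) ℂ)

/-- `G` contains (the standard matrix representation of) the symmetric group `S_n`:
every `n × n` permutation matrix belongs to `G`. -/
def containsSn {n : ℕ} (G : Subgroup (Matrix.unitaryGroup (Fin n) ℂ)) : Prop :=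
  ∀ σ : Equiv.Perm (Fin n), ∃ P ∈ G,
    ((P : Matrix.unitaryGroup (Fin n) ℂ) : Matrix (Fin n) (Fin n) ℂ) = σ.permMatrix ℂ

lemma canonicalProd_succ' {n k : ℕ} (As Bs : Fin (k + 1) → Matrix (Fin n) (Fin n) ℂ) :
    canonicalProd As Bs =
      Bs (Fin.last k) * As (Fin.last k) *
        canonicalProd (fun i : Fin k => As i.castSucc) (fun i => Bs i.castSucc) := by
  unfold canonicalProd
  rw [List.ofFn_succ', List.concat_eq_append, List.reverse_append]
  simp

lemma permMatrix_mulVec' {n : ℕ} (σ : Equiv.Perm (Fin n)) (q : Fin n) :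
    (σ.permMatrix ℂ).mulVec (Pi.single q 1) = Pi.single (σ⁻¹ q) 1 := by
  funext j
  simp only [Matrix.mulVec, dotProduct, Pi.single_apply,
    mul_ite, mul_one, mul_zero, Finset.sum_ite_eq', Finset.mem_univ, if_true,
    Equiv.Perm.permMatrix, PEquiv.toMatrix_apply, Equiv.toPEquiv_apply, Option.mem_def,
    Option.some.injEq]
  rw [show σ⁻¹ q = σ.symm q from rfl]
  simp only [Equiv.eq_symm_apply]

lemma toMat_one {n : ℕ} {G : Subgroup (Matrix.unitaryGroup (Fin n) ℂ)} :
    toMat (1 : G) = 1 := by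
  simp [toMat]

/-- In a canonical game of `2m` rounds where the action group `B` of player 2 contains
every permutation matrix and is a proper subgroup of the action group `A` of player 1
(`S_n ≤ B < A ≤ U(n)`), player 1 has no strong winning strategy. -/
theorem canonical_B_lt_A_no_sws_player1
    (n m : ℕ) (hn : 2 ≤ n) (hm : 1 ≤ m)
    (A B : Subgroup (Matrix.unitaryGroup (Fin n) ℂ)) (hBA : B < A) (hSn : containsSn B)
    (q0 qA qB : Fin n) (hq : qA ≠ qB)
    (As : Fin m → A) :
    ∃ Bs : Fin m → B,
      (canonicalProd (fun i => toMat (As i)) (fun i => toMat (Bs i))).mulVec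
        (Pi.single q0 1) ≠ Pi.single qA 1 := by
  obtain ⟨k, rfl⟩ : ∃ k, m = k + 1 := ⟨m - 1, (Nat.succ_pred_eq_of_pos hm).symm⟩
  set M : Matrix (Fin n) (Fin n) ℂ :=
    canonicalProd (fun i => toMat (As i)) (fun _ : Fin (k + 1) => toMat (1 : B)) with hM
  by_cases h : M.mulVec (Pi.single q0 1) = Pi.single qA 1
  · -- the identity strategy would land on qA; player 2 swaps qA and qB at the last move
    obtain ⟨P, hPB, hP⟩ := hSn (Equiv.swap qA qB)
    refine ⟨fun i => if i = Fin.last k then ⟨P, hPB⟩ else 1, ?_⟩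
    have hBs : ∀ i : Fin k,
        toMat (if (i.castSucc : Fin (k + 1)) = Fin.last k then (⟨P, hPB⟩ : B) else 1) =
          toMat (1 : B) := by
      intro i
      rw [if_neg (Fin.castSucc_lt_last i).ne]
    have key : canonicalProd (fun i => toMat (As i))
        (fun i => toMat (if i = Fin.last k then (⟨P, hPB⟩ : B) else 1)) =
        (Equiv.swap qA qB).permMatrix ℂ * M := by
      rw [canonicalProd_succ', hM, canonicalProd_succ']
      simp only [if_pos rfl, hBs, toMat_one, one_mul]
      rw [← hP]
      rw [mul_assoc]
      rfl
    rw [key, ← Matrix.mulVec_mulVec, h, permMatrix_mulVec']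
    have hswap : (Equiv.swap qA qB)⁻¹ qA = qB := by simp
    rw [hswap]
    intro hcontra
    have := congrFun hcontra qA
    simp [Pi.single_apply, hq.symm, Ne.symm hq] at this
  · -- the identity strategy already avoids qA
    exact ⟨fun _ => 1, h⟩
end

section
/- Consider a noncanonical game of 2m+1 rounds (m ≥ 1) on ℂ^n in which player 1 makes the first and the last move. If the action group A of player 1 contains every n×n permutation matrix and contains a unitary U such that the state ψ = U e_{q0} is invariant under the action group B of player 2 (i.e. B_i ψ = ψ for every B_i ∈ B), then player 1 has a strong winning strategy: there exist A_1, …, A_{m+1} ∈ A (namely A_1 = U, A_2 = ⋯ = A_m = I, A_{m+1} = T_{q0,qA} U^{-1}) such that for every choice B_1, …, B_m ∈ B one has A_{m+1} B_m A_m ⋯ B_1 A_1 e_{q0} = e_{qA}. -/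
/-! Player 1 opens with `U`, moving `e_{q0}` to `ψ = U e_{q0}`, and then plays the identity, so
the state stays at `ψ`, which every move of player 2 fixes. Composing the last move on the left
with `T_{q0,qA} U⁻¹` composes the whole game with it, and this sends `ψ` to `e_{qA}`. -/

open Matrix

section Game

variable {n m : ℕ}

lemma noncanonicalProd_zero (As : Fin 1 → Matrix (Fin n) (Fin n) ℂ)
    (Bs : Fin 0 → Matrix (Fin n) (Fin n) ℂ) : noncanonicalProd As Bs = As 0 := by
  simp [noncanonicalProd]

lemma noncanonicalProd_succ (As : Fin (m + 2) → Matrix (Fin n) (Fin n) ℂ)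
    (Bs : Fin (m + 1) → Matrix (Fin n) (Fin n) ℂ) :
    noncanonicalProd As Bs = As (Fin.last (m + 1)) * Bs (Fin.last m) *
      noncanonicalProd (fun i => As i.castSucc) (fun i => Bs i.castSucc) := by
  simp only [noncanonicalProd, List.ofFn_succ' (fun i : Fin (m + 1) => Bs i * As i.castSucc),
    List.concat_eq_append, List.reverse_append, List.reverse_cons, List.reverse_nil,
    List.nil_append, List.singleton_append, List.prod_cons, mul_assoc]

lemma noncanonicalProd_update_last (As : Fin (m + 1) → Matrix (Fin n) (Fin n) ℂ)
    (Bs : Fin m → Matrix (Fin n) (Fin n) ℂ) (C : Matrix (Fin n) (Fin n) ℂ) :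
    noncanonicalProd (Function.update As (Fin.last m) (C * As (Fin.last m))) Bs =
      C * noncanonicalProd As Bs := by
  simp only [noncanonicalProd, Function.update_self, mul_assoc,
    Function.update_of_ne (Fin.castSucc_lt_last _).ne]

lemma noncanonicalProd_mulVec_eq_of_fixed {v ψ : Fin n → ℂ} :
    ∀ {m : ℕ} (As : Fin (m + 1) → Matrix (Fin n) (Fin n) ℂ) (Bs : Fin m → Matrix (Fin n) (Fin n) ℂ),
      As 0 *ᵥ v = ψ → (∀ i : Fin m, As i.succ *ᵥ ψ = ψ) → (∀ i, Bs i *ᵥ ψ = ψ) →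
      noncanonicalProd As Bs *ᵥ v = ψ
  | 0, As, Bs, hA0, _, _ => by rwa [noncanonicalProd_zero]
  | m + 1, As, Bs, hA0, hA, hB => by
    have hprefix := noncanonicalProd_mulVec_eq_of_fixed (fun i => As i.castSucc)
      (fun i => Bs i.castSucc) hA0 (fun i : Fin m => hA i.castSucc) (fun i => hB i.castSucc)
    rw [noncanonicalProd_succ, ← mulVec_mulVec, hprefix, ← mulVec_mulVec, hB, ← Fin.succ_last, hA]

lemma toMat_mul {G : Subgroup (unitaryGroup (Fin n) ℂ)} (x y : G) :
    toMat (x * y) = toMat x * toMat y := rfl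

lemma toMat_inv_mul_self {G : Subgroup (unitaryGroup (Fin n) ℂ)} (x : G) :
    toMat x⁻¹ * toMat x = 1 := by
  rw [← toMat_mul, inv_mul_cancel]
  rfl

end Game

lemma permMatrix_mulVec_single {ι R : Type*} [Fintype ι] [DecidableEq ι] [CommRing R]
    (σ : Equiv.Perm ι) (a : ι) : σ.permMatrix R *ᵥ Pi.single a 1 = Pi.single (σ.symm a) 1 := by
  ext i
  rw [permMatrix_mulVec]
  simp [Pi.single_apply, Equiv.eq_symm_apply]

theorem noncanonical_invariant_state_sws_player1_general
    (n m : ℕ)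
    (A B : Subgroup (Matrix.unitaryGroup (Fin n) ℂ)) (hSn : containsSn A)
    (q0 qA : Fin n)
    (U : Matrix.unitaryGroup (Fin n) ℂ) (hU : U ∈ A)
    (hinv : ∀ Bi ∈ B, ((Bi : Matrix.unitaryGroup (Fin n) ℂ) : Matrix (Fin n) (Fin n) ℂ).mulVec
        ((U : Matrix (Fin n) (Fin n) ℂ).mulVec (Pi.single q0 1))
      = (U : Matrix (Fin n) (Fin n) ℂ).mulVec (Pi.single q0 1)) :
    ∃ As : Fin (m + 1) → A, ∀ Bs : Fin m → B,
      (noncanonicalProd (fun i => toMat (As i)) (fun i => toMat (Bs i))).mulVec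
        (Pi.single q0 1) = Pi.single qA 1 := by
  obtain ⟨T, hT, hTmat⟩ := hSn (Equiv.swap q0 qA)
  let UA : A := ⟨U, hU⟩
  let TA : A := ⟨T, hT⟩
  let opening : Fin (m + 1) → A := fun i => if i = 0 then UA else 1
  refine ⟨Function.update opening (Fin.last m) (TA * UA⁻¹ * opening (Fin.last m)), fun Bs => ?_⟩
  have hψ : noncanonicalProd (fun i => toMat (opening i)) (fun i => toMat (Bs i)) *ᵥ
      Pi.single q0 1 = toMat UA *ᵥ Pi.single q0 1 :=
    noncanonicalProd_mulVec_eq_of_fixed _ _ (by simp [opening])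
      (fun i => by simp [opening, toMat]) (fun i => hinv _ (Bs i).2)
  rw [funext (Function.apply_update (fun _ => toMat) opening (Fin.last m) _), toMat_mul, toMat_mul,
    noncanonicalProd_update_last, ← mulVec_mulVec, hψ, mulVec_mulVec, mul_assoc,
    toMat_inv_mul_self, mul_one]
  simp only [TA, toMat, hTmat, permMatrix_mulVec_single, Equiv.symm_swap, Equiv.swap_apply_left]

/-- Noncanonical game, different action groups: if the action group `A` of player 1
contains every permutation matrix, and contains a unitary `U` driving the initial
state to a state `ψ = U e_{q0}` invariant under the action group `B` of player 2,
then player 1 has a strong winning strategy. -/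
theorem noncanonical_invariant_state_sws_player1
    (n m : ℕ) (hn : 2 ≤ n) (hm : 1 ≤ m)
    (A B : Subgroup (Matrix.unitaryGroup (Fin n) ℂ)) (hSn : containsSn A)
    (q0 qA qB : Fin n) (hq : qA ≠ qB)
    (U : Matrix.unitaryGroup (Fin n) ℂ) (hU : U ∈ A)
    (hinv : ∀ Bi ∈ B, ((Bi : Matrix.unitaryGroup (Fin n) ℂ) : Matrix (Fin n) (Fin n) ℂ).mulVec
        ((U : Matrix (Fin n) (Fin n) ℂ).mulVec (Pi.single q0 1))
      = (U : Matrix (Fin n) (Fin n) ℂ).mulVec (Pi.single q0 1)) :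
    ∃ As : Fin (m + 1) → A, ∀ Bs : Fin m → B,
      (noncanonicalProd (fun i => toMat (As i)) (fun i => toMat (Bs i))).mulVec
        (Pi.single q0 1) = Pi.single qA 1 :=
  noncanonical_invariant_state_sws_player1_general n m A B hSn q0 qA U hU hinv
end
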